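/- arXiv:1906.09338 — 2 statements merged into one kernel-verified Lean document; each statement's English description precedes it below -/
import Mathlib

section
/- The Gaussian mechanism with sensitivity 1 and variance σ², which outputs f(D) + N(0, σ²) for a function f with |f(D) − f(D')| ≤ 1 on neighboring datasets, satisfies (λ, λ/(2σ²))-RDP for all λ > 1. -/
open MeasureTheory Real ProbabilityTheory

/-- Rényi divergence of order `l` between measures `P` and `Q`. -/
noncomputable def renyiDiv {Ω : Type*} [MeasurableSpace Ω] (l : ℝ) (P Q : Measure Ω) : ℝ :=
  (l - 1)⁻¹ * Real.log (∫ x, ((P.rnDeriv Q x).toReal) ^ l ∂Q)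

/-- `(l, ε)`-Rényi differential privacy. -/
def RDP {Dset Ω : Type*} [MeasurableSpace Ω] (Neighbor : Dset → Dset → Prop)
    (M : Dset → Measure Ω) (l ε : ℝ) : Prop :=
  ∀ D D', Neighbor D D' → renyiDiv l (M D) (M D') ≤ ε

/-!
For two Gaussians of common variance `v`, the likelihood ratio `p_a / p_b` is the exponential of
an affine function of `x`, so `p_b (p_a / p_b) ^ l` is, after completing the square, a multiple
`exp (l (l - 1) (a - b)² / (2v))` of the Gaussian density centred at `b + l (a - b)`. Hence
`∫ (dP/dQ) ^ l dQ = exp (l (l - 1) (a - b)² / (2v))` and the Rényi divergence of order `l` is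
`l (a - b)² / (2v)`, which is at most `l / (2σ²)` when `|a - b| ≤ 1` and `v = σ²`.
-/

open scoped NNReal

namespace ProbabilityTheory

variable {v : ℝ≥0}

lemma gaussianPDFReal_mul_div_rpow (a b l : ℝ) (hv : v ≠ 0) (x : ℝ) :
    gaussianPDFReal b v x * (gaussianPDFReal a v x / gaussianPDFReal b v x) ^ l
      = exp (l * (l - 1) * (a - b) ^ 2 / (2 * v)) * gaussianPDFReal (b + l * (a - b)) v x := by
  have hv' : (0 : ℝ) < v := by positivity
  have hc : (√(2 * π * v))⁻¹ ≠ 0 := by positivity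
  simp only [gaussianPDFReal]
  rw [mul_div_mul_left _ _ hc, ← exp_sub, ← exp_mul, mul_left_comm (exp _), mul_assoc, ← exp_add,
    ← exp_add]
  congr 2
  field_simp
  ring

lemma gaussianReal_eq_withDensity_div (a b : ℝ) (hv : v ≠ 0) :
    gaussianReal a v = (gaussianReal b v).withDensity
      fun x ↦ ENNReal.ofReal (gaussianPDFReal a v x / gaussianPDFReal b v x) := by
  rw [gaussianReal_of_var_ne_zero b hv, gaussianReal_of_var_ne_zero a hv,
    ← withDensity_mul _ (measurable_gaussianPDF b v) (by fun_prop)]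
  congr 1
  funext x
  rw [Pi.mul_apply, gaussianPDF, gaussianPDF, ← ENNReal.ofReal_mul (gaussianPDFReal_nonneg b v x),
    mul_div_cancel₀ _ (gaussianPDFReal_pos b v x hv).ne']

lemma rnDeriv_gaussianReal_gaussianReal (a b : ℝ) (hv : v ≠ 0) :
    (gaussianReal a v).rnDeriv (gaussianReal b v) =ᵐ[gaussianReal b v]
      fun x ↦ ENNReal.ofReal (gaussianPDFReal a v x / gaussianPDFReal b v x) := by
  conv_lhs => rw [gaussianReal_eq_withDensity_div a b hv]
  exact Measure.rnDeriv_withDensity _ (by fun_prop)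

lemma integral_rnDeriv_gaussianReal_rpow (a b l : ℝ) (hv : v ≠ 0) :
    ∫ x, ((gaussianReal a v).rnDeriv (gaussianReal b v) x).toReal ^ l ∂gaussianReal b v
      = exp (l * (l - 1) * (a - b) ^ 2 / (2 * v)) := by
  have hratio : ∀ x, 0 ≤ gaussianPDFReal a v x / gaussianPDFReal b v x := fun x ↦
    div_nonneg (gaussianPDFReal_nonneg a v x) (gaussianPDFReal_nonneg b v x)
  calc ∫ x, ((gaussianReal a v).rnDeriv (gaussianReal b v) x).toReal ^ l ∂gaussianReal b v
      = ∫ x, (gaussianPDFReal a v x / gaussianPDFReal b v x) ^ l ∂gaussianReal b v :=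
        integral_congr_ae <| (rnDeriv_gaussianReal_gaussianReal a b hv).mono fun x hx ↦ by
          simp only [hx, ENNReal.toReal_ofReal (hratio x)]
    _ = ∫ x, exp (l * (l - 1) * (a - b) ^ 2 / (2 * v)) *
          gaussianPDFReal (b + l * (a - b)) v x := by
        rw [integral_gaussianReal_eq_integral_smul hv]
        simp only [smul_eq_mul, gaussianPDFReal_mul_div_rpow a b l hv]
    _ = exp (l * (l - 1) * (a - b) ^ 2 / (2 * v)) := by
        rw [integral_const_mul, integral_gaussianPDFReal_eq_one _ hv, mul_one]

lemma renyiDiv_gaussianReal (a b : ℝ) {l : ℝ} (hl : l ≠ 1) (hv : v ≠ 0) :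
    renyiDiv l (gaussianReal a v) (gaussianReal b v) = l * (a - b) ^ 2 / (2 * v) := by
  have hl' : l - 1 ≠ 0 := sub_ne_zero.mpr hl
  rw [renyiDiv, integral_rnDeriv_gaussianReal_rpow a b l hv, log_exp]
  field_simp

end ProbabilityTheory

/-- The Gaussian mechanism `D ↦ f D + N(0, σ²)` with sensitivity 1 satisfies
`(l, l/(2σ²))`-RDP for all `l > 1`. -/
theorem gaussian_mechanism_rdp {Dset : Type*} (Neighbor : Dset → Dset → Prop)
    (f : Dset → ℝ) (σ : ℝ) (hσ : 0 < σ)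
    (hsens : ∀ D D', Neighbor D D' → |f D - f D'| ≤ 1)
    (l : ℝ) (hl : 1 < l) :
    RDP Neighbor (fun D => gaussianReal (f D) ⟨σ ^ 2, sq_nonneg σ⟩) l (l / (2 * σ ^ 2)) := by
  intro D D' hN
  have hv : (⟨σ ^ 2, sq_nonneg σ⟩ : ℝ≥0) ≠ 0 :=
    (show (0 : ℝ≥0) < ⟨σ ^ 2, sq_nonneg σ⟩ from pow_pos hσ 2).ne'
  have hΔ : (f D - f D') ^ 2 ≤ 1 := by
    rw [← sq_abs]
    exact pow_le_one₀ (abs_nonneg _) (hsens D D' hN)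
  calc renyiDiv l (gaussianReal (f D) ⟨σ ^ 2, sq_nonneg σ⟩) (gaussianReal (f D') ⟨σ ^ 2, _⟩)
      = l * (f D - f D') ^ 2 / (2 * σ ^ 2) := renyiDiv_gaussianReal _ _ hl.ne' hv
    _ ≤ l / (2 * σ ^ 2) := by
      gcongr
      exact mul_le_of_le_one_right (by linarith) hΔ
end

section
/- For k adaptive invocations of a Gaussian mechanism with sensitivity 1 and variance σ², the resulting mechanism satisfies (ε, δ)-DP with ε = k/(2σ²) + √(2k·log(1/δ))/σ for any δ ∈ (0,1), obtained by optimizing the RDP order λ. -/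
open MeasureTheory Real ProbabilityTheory

/-- `(ε, δ)`-differential privacy. -/
def DP {Dset Ω : Type*} [MeasurableSpace Ω] (Neighbor : Dset → Dset → Prop)
    (M : Dset → Measure Ω) (ε δ : ℝ) : Prop :=
  ∀ D D', Neighbor D D' → ∀ S : Set Ω, MeasurableSet S →
    ((M D) S).toReal ≤ Real.exp ε * ((M D') S).toReal + δ

/-- Adaptive composition of mechanisms `M 0, …, M (k-1)`. -/
noncomputable def composed {Dset Ω : Type*} [MeasurableSpace Ω]
    (M : (i : ℕ) → Dset → (Fin i → Ω) → Measure Ω) (D : Dset) :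
    (k : ℕ) → Measure (Fin k → Ω)
  | 0 => Measure.dirac (fun i => i.elim0)
  | (k + 1) => (composed M D k).bind (fun h => (M k D h).map (Fin.snoc h))

/-!
A Gaussian step with means at distance at most `1` has order-`r` Rényi integral
`∫ p ^ r q ^ (1 - r) = exp (r (r - 1) (μ - μ')² / (2σ²)) ≤ exp (r (r - 1) / (2σ²))`.
Integrating out the last output first (Fubini), these bounds multiply along the adaptive
composition, even though each step's means depend on the history, giving
`exp (k r (r - 1) / (2σ²))` for the joint densities `P, Q`. The pointwise inequality
`p ≤ e^ε q + e^(-(r - 1) ε) p ^ r q ^ (1 - r)` then yields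
`P S ≤ e^ε Q S + exp (k r (r - 1) / (2σ²) - (r - 1) ε)`, and the order
`r = 1 + σ √(2 log (1/δ) / k)` makes the last term exactly `δ`.
-/

open scoped ENNReal NNReal

section Snoc

variable {Ω : Type*} [MeasurableSpace Ω] {k : ℕ}

theorem measurable_snoc :
    Measurable fun z : (Fin k → Ω) × Ω => (Fin.snoc z.1 z.2 : Fin (k + 1) → Ω) := by
  have := (MeasurableEquiv.piFinSuccAbove (fun _ : Fin (k + 1) => Ω) (Fin.last k)).symm.measurable
  convert this.comp measurable_swap using 1
  ext z i
  simp [MeasurableEquiv.piFinSuccAbove, Fin.insertNthEquiv, Fin.insertNth_last']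

theorem lintegral_pi_snoc (μ : Measure Ω) [SigmaFinite μ]
    {F : (Fin (k + 1) → Ω) → ℝ≥0∞} (hF : Measurable F) :
    ∫⁻ z, F z ∂Measure.pi (fun _ => μ) =
      ∫⁻ h, ∫⁻ x, F (Fin.snoc h x) ∂μ ∂Measure.pi (fun _ => μ) := by
  have e := (measurePreserving_piFinSuccAbove (fun _ : Fin (k + 1) => μ) (Fin.last k)).symm
  rw [← e.lintegral_comp hF, ← Function.comp_def, lintegral_prod_symm' _ (hF.comp e.measurable)]
  simp [MeasurableEquiv.piFinSuccAbove, Fin.insertNthEquiv, Fin.insertNth_last']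

theorem measurable_snoc_left (h : Fin k → Ω) : Measurable (Fin.snoc (α := fun _ => Ω) h) :=
  measurable_snoc.comp measurable_prodMk_left

theorem measurable_init_last :
    Measurable fun z : Fin (k + 1) → Ω => (Fin.init z, z (Fin.last k)) :=
  (measurable_pi_lambda _ fun _ => measurable_pi_apply _).prodMk (measurable_pi_apply _)

theorem map_snoc_withDensity_apply (μ : Measure Ω) (q : Ω → ℝ≥0∞)
    (h : Fin k → Ω) {s : Set (Fin (k + 1) → Ω)} (hs : MeasurableSet s) :
    ((μ.withDensity q).map (Fin.snoc h)) s =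
      ∫⁻ x, (Fin.snoc h ⁻¹' s).indicator q x ∂μ := by
  rw [Measure.map_apply (measurable_snoc_left h) hs,
    withDensity_apply _ (measurable_snoc_left h hs),
    lintegral_indicator (measurable_snoc_left h hs)]

theorem measurable_map_snoc_withDensity (μ : Measure Ω) [SFinite μ]
    {q : (Fin k → Ω) → Ω → ℝ≥0∞} (hq : Measurable (Function.uncurry q)) :
    Measurable fun h =>
      ((μ.withDensity (q h)).map (Fin.snoc h) : Measure (Fin (k + 1) → Ω)) := by
  refine Measure.measurable_of_measurable_coe _ fun s hs => ?_
  simp_rw [map_snoc_withDensity_apply μ _ _ hs]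
  exact (hq.indicator (measurable_snoc hs)).lintegral_prod_right'

theorem withDensity_bind_map_snoc (μ : Measure Ω) [SigmaFinite μ]
    {p : (Fin k → Ω) → ℝ≥0∞} (hp : Measurable p)
    {q : (Fin k → Ω) → Ω → ℝ≥0∞} (hq : Measurable (Function.uncurry q)) :
    ((Measure.pi fun _ => μ).withDensity p).bind
        (fun h => ((μ.withDensity (q h)).map (Fin.snoc h) : Measure (Fin (k + 1) → Ω))) =
      (Measure.pi fun _ => μ).withDensity fun z =>
        p (Fin.init z) * q (Fin.init z) (z (Fin.last k)) := by
  ext s hs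
  have hκ := measurable_map_snoc_withDensity μ hq
  have hκs : Measurable fun h =>
      ((μ.withDensity (q h)).map (Fin.snoc h) : Measure (Fin (k + 1) → Ω)) s :=
    (Measure.measurable_coe hs).comp hκ
  rw [Measure.bind_apply hs hκ.aemeasurable, lintegral_withDensity_eq_lintegral_mul _ hp hκs,
    withDensity_apply _ hs, ← lintegral_indicator hs, lintegral_pi_snoc]
  · congr 1 with h
    have hqh : Measurable (q h) := hq.comp measurable_prodMk_left
    rw [Pi.mul_apply, map_snoc_withDensity_apply μ _ h hs,
      ← lintegral_const_mul _ (hqh.indicator (measurable_snoc_left h hs))]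
    congr 1 with x
    by_cases hx : Fin.snoc h x ∈ s <;> simp [hx]
  · exact (((hp.comp (measurable_fst.comp measurable_init_last)).mul
      (hq.comp measurable_init_last)).indicator hs)

end Snoc

section Adaptive

variable {Ω : Type*}

/-- Joint density of `k` adaptively generated outputs, where `p i h` is the density of the
`i`-th output given the history `h` of the previous ones. -/
noncomputable def adaptiveDensity (p : (i : ℕ) → (Fin i → Ω) → Ω → ℝ) :
    (k : ℕ) → (Fin k → Ω) → ℝ
  | 0, _ => 1
  | k + 1, z => adaptiveDensity p k (Fin.init z) * p k (Fin.init z) (z (Fin.last k))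

variable {p q : (i : ℕ) → (Fin i → Ω) → Ω → ℝ}

@[simp]
theorem adaptiveDensity_snoc (k : ℕ) (h : Fin k → Ω) (x : Ω) :
    adaptiveDensity p (k + 1) (Fin.snoc h x) = adaptiveDensity p k h * p k h x := by
  simp [adaptiveDensity]

theorem adaptiveDensity_nonneg (hp : ∀ i h x, 0 ≤ p i h x) :
    ∀ k z, 0 ≤ adaptiveDensity p k z
  | 0, _ => zero_le_one
  | k + 1, _ => mul_nonneg (adaptiveDensity_nonneg hp k _) (hp _ _ _)

theorem adaptiveDensity_pos (hp : ∀ i h x, 0 < p i h x) :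
    ∀ k z, 0 < adaptiveDensity p k z
  | 0, _ => zero_lt_one
  | k + 1, _ => mul_pos (adaptiveDensity_pos hp k _) (hp _ _ _)

variable [MeasurableSpace Ω]

theorem measurable_adaptiveDensity (hp : ∀ i, Measurable (Function.uncurry (p i))) :
    ∀ k, Measurable (adaptiveDensity p k)
  | 0 => measurable_const
  | k + 1 => ((measurable_adaptiveDensity hp k).comp (measurable_fst.comp measurable_init_last)).mul
      ((hp k).comp measurable_init_last)

theorem composed_eq_withDensity {Dset : Type*} (μ : Measure Ω) [SigmaFinite μ]
    {M : (i : ℕ) → Dset → (Fin i → Ω) → Measure Ω} {D : Dset}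
    (hp : ∀ i, Measurable (Function.uncurry (p i))) (hp_nonneg : ∀ i h x, 0 ≤ p i h x)
    (hM : ∀ i h, M i D h = μ.withDensity fun x => ENNReal.ofReal (p i h x)) :
    ∀ k, composed M D k =
      (Measure.pi fun _ => μ).withDensity fun z => ENNReal.ofReal (adaptiveDensity p k z)
  | 0 => by
    simp only [composed, adaptiveDensity, ENNReal.ofReal_one]
    rw [← Pi.one_def, withDensity_one, Measure.pi_of_empty (x := fun i => i.elim0)]
  | k + 1 => by
    simp_rw [composed, hM, composed_eq_withDensity μ hp hp_nonneg hM k]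
    rw [withDensity_bind_map_snoc μ (measurable_adaptiveDensity hp k).ennreal_ofReal
      (q := fun h x => ENNReal.ofReal (p k h x)) (hp k).ennreal_ofReal]
    simp_rw [adaptiveDensity, ENNReal.ofReal_mul (adaptiveDensity_nonneg hp_nonneg _ _)]

end Adaptive

section Renyi

variable {Ω : Type*} [MeasurableSpace Ω]

/-- `exp ((r - 1) D_r(p ‖ q))`, where `D_r` is the Rényi divergence of order `r`. -/
noncomputable def renyiIntegral (μ : Measure Ω) (p q : Ω → ℝ) (r : ℝ) : ℝ≥0∞ :=
  ∫⁻ x, ENNReal.ofReal (p x ^ r * q x ^ (1 - r)) ∂μ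

theorem renyiIntegral_one (μ : Measure Ω) (p q : Ω → ℝ) :
    renyiIntegral μ p q 1 = ∫⁻ x, ENNReal.ofReal (p x) ∂μ := by
  simp [renyiIntegral]

theorem renyiIntegral_adaptiveDensity_le (μ : Measure Ω) [SigmaFinite μ]
    {p q : (i : ℕ) → (Fin i → Ω) → Ω → ℝ}
    (hp : ∀ i, Measurable (Function.uncurry (p i)))
    (hq : ∀ i, Measurable (Function.uncurry (q i)))
    (hp_nonneg : ∀ i h x, 0 ≤ p i h x) (hq_nonneg : ∀ i h x, 0 ≤ q i h x)
    {r : ℝ} {c : ℝ≥0∞}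
    (hc : ∀ i h, renyiIntegral μ (p i h) (q i h) r ≤ c) :
    ∀ k, renyiIntegral (Measure.pi fun _ => μ) (adaptiveDensity p k) (adaptiveDensity q k) r ≤
      c ^ k
  | 0 => by simp [renyiIntegral, adaptiveDensity]
  | k + 1 => by
    have hmeas : ∀ n, Measurable fun z =>
        ENNReal.ofReal (adaptiveDensity p n z ^ r * adaptiveDensity q n z ^ (1 - r)) := fun n =>
      (((measurable_adaptiveDensity hp n).pow_const r).mul
        ((measurable_adaptiveDensity hq n).pow_const _)).ennreal_ofReal
    calc renyiIntegral _ (adaptiveDensity p (k + 1)) (adaptiveDensity q (k + 1)) r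
        = ∫⁻ h, ENNReal.ofReal (adaptiveDensity p k h ^ r * adaptiveDensity q k h ^ (1 - r)) *
            renyiIntegral μ (p k h) (q k h) r ∂Measure.pi fun _ => μ := by
          rw [renyiIntegral, lintegral_pi_snoc _ (hmeas _)]
          congr 1 with h
          rw [renyiIntegral, ← lintegral_const_mul' _ _ ENNReal.ofReal_ne_top]
          congr 1 with x
          rw [adaptiveDensity_snoc, adaptiveDensity_snoc,
            mul_rpow (adaptiveDensity_nonneg hp_nonneg _ _) (hp_nonneg _ _ _),
            mul_rpow (adaptiveDensity_nonneg hq_nonneg _ _) (hq_nonneg _ _ _),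
            ← ENNReal.ofReal_mul (mul_nonneg
              (rpow_nonneg (adaptiveDensity_nonneg hp_nonneg _ _) _)
              (rpow_nonneg (adaptiveDensity_nonneg hq_nonneg _ _) _))]
          ring_nf
      _ ≤ ∫⁻ h, ENNReal.ofReal (adaptiveDensity p k h ^ r * adaptiveDensity q k h ^ (1 - r)) *
            c ∂Measure.pi fun _ => μ :=
          lintegral_mono fun h => by gcongr; exact hc k h
      _ = renyiIntegral _ (adaptiveDensity p k) (adaptiveDensity q k) r * c :=
          lintegral_mul_const _ (hmeas k)
      _ ≤ c ^ (k + 1) := by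
          rw [pow_succ]
          gcongr
          exact renyiIntegral_adaptiveDensity_le μ hp hq hp_nonneg hq_nonneg hc k

theorem le_exp_mul_add_exp_mul_rpow_mul_rpow {p q r : ℝ} (hp : 0 ≤ p) (hq : 0 < q)
    (hr : 1 ≤ r) (ε : ℝ) :
    p ≤ exp ε * q + exp (-((r - 1) * ε)) * (p ^ r * q ^ (1 - r)) := by
  rcases le_or_gt p (exp ε * q) with hle | hlt
  · have : 0 ≤ exp (-((r - 1) * ε)) * (p ^ r * q ^ (1 - r)) := by positivity
    linarith
  have hratio : exp ε ≤ p / q := (le_div_iff₀ hq).2 hlt.le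
  have hsplit : p ^ r * q ^ (1 - r) = p * (p / q) ^ (r - 1) := by
    rw [div_rpow hp hq.le, show 1 - r = -(r - 1) by ring, rpow_neg hq.le,
      show r = 1 + (r - 1) by ring, rpow_add' hp (by linarith), rpow_one]
    ring_nf
  have hgrowth : exp ((r - 1) * ε) ≤ (p / q) ^ (r - 1) := by
    rw [mul_comm, exp_mul]
    exact rpow_le_rpow (exp_nonneg _) hratio (by linarith)
  calc p = exp (-((r - 1) * ε)) * (p * exp ((r - 1) * ε)) := by
        rw [mul_left_comm, ← exp_add, neg_add_cancel, exp_zero, mul_one]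
    _ ≤ exp (-((r - 1) * ε)) * (p ^ r * q ^ (1 - r)) := by
        rw [hsplit]
        gcongr
    _ ≤ _ := le_add_of_nonneg_left (by positivity)

theorem withDensity_le_exp_mul_withDensity_add_renyiIntegral
    (μ : Measure Ω) {p q : Ω → ℝ} (hq : Measurable q) (hp_nonneg : ∀ x, 0 ≤ p x)
    (hq_pos : ∀ x, 0 < q x) {r : ℝ} (hr : 1 ≤ r) (ε : ℝ) {S : Set Ω}
    (hS : MeasurableSet S) :
    μ.withDensity (fun x => ENNReal.ofReal (p x)) S ≤
      ENNReal.ofReal (exp ε) * μ.withDensity (fun x => ENNReal.ofReal (q x)) S +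
        ENNReal.ofReal (exp (-((r - 1) * ε))) * renyiIntegral μ p q r := by
  rw [withDensity_apply _ hS, withDensity_apply _ hS]
  calc ∫⁻ x in S, ENNReal.ofReal (p x) ∂μ
      ≤ ∫⁻ x in S, ENNReal.ofReal (exp ε) * ENNReal.ofReal (q x) +
          ENNReal.ofReal (exp (-((r - 1) * ε))) *
            ENNReal.ofReal (p x ^ r * q x ^ (1 - r)) ∂μ := by
        refine lintegral_mono fun x => ?_
        rw [← ENNReal.ofReal_mul (exp_nonneg _), ← ENNReal.ofReal_mul (exp_nonneg _),
          ← ENNReal.ofReal_add (by positivity [hq_pos x])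
            (mul_nonneg (exp_nonneg _) (by positivity [hp_nonneg x, hq_pos x]))]
        exact ENNReal.ofReal_le_ofReal
          (le_exp_mul_add_exp_mul_rpow_mul_rpow (hp_nonneg x) (hq_pos x) hr ε)
    _ = ENNReal.ofReal (exp ε) * ∫⁻ x in S, ENNReal.ofReal (q x) ∂μ +
          ENNReal.ofReal (exp (-((r - 1) * ε))) *
            ∫⁻ x in S, ENNReal.ofReal (p x ^ r * q x ^ (1 - r)) ∂μ := by
        rw [lintegral_add_left (hq.ennreal_ofReal.const_mul _),
          lintegral_const_mul' _ _ ENNReal.ofReal_ne_top,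
          lintegral_const_mul' _ _ ENNReal.ofReal_ne_top]
    _ ≤ _ := by
        gcongr
        exact setLIntegral_le_lintegral _ _

end Renyi

section Gaussian

variable {v : ℝ≥0}

theorem gaussianPDFReal_rpow_mul_rpow (hv : v ≠ 0) (μ μ' r x : ℝ) :
    gaussianPDFReal μ v x ^ r * gaussianPDFReal μ' v x ^ (1 - r) =
      exp (r * (r - 1) * (μ - μ') ^ 2 / (2 * v)) *
        gaussianPDFReal (r * μ + (1 - r) * μ') v x := by
  have hC : 0 ≤ (√(2 * π * v))⁻¹ := by positivity
  have hv' : (v : ℝ) ≠ 0 := NNReal.coe_ne_zero.2 hv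
  simp only [gaussianPDFReal, mul_rpow hC (exp_nonneg _), ← exp_mul]
  calc _ = (√(2 * π * v))⁻¹ ^ (r + (1 - r)) *
        exp (-(x - μ) ^ 2 / (2 * v) * r + -(x - μ') ^ 2 / (2 * v) * (1 - r)) := by
        rw [rpow_add' hC (by norm_num), exp_add]
        ring
    _ = _ := by
        rw [add_sub_cancel, rpow_one, mul_left_comm, ← exp_add]
        congr 2
        field_simp
        ring

theorem renyiIntegral_gaussianPDFReal (hv : v ≠ 0) (μ μ' r : ℝ) :
    renyiIntegral volume (gaussianPDFReal μ v) (gaussianPDFReal μ' v) r =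
      ENNReal.ofReal (exp (r * (r - 1) * (μ - μ') ^ 2 / (2 * v))) := by
  simp_rw [renyiIntegral, gaussianPDFReal_rpow_mul_rpow hv, ENNReal.ofReal_mul (exp_nonneg _)]
  rw [lintegral_const_mul _ (measurable_gaussianPDFReal _ _).ennreal_ofReal,
    lintegral_gaussianPDFReal_eq_one _ hv, mul_one]

theorem renyiIntegral_gaussianPDFReal_le (hv : v ≠ 0) {μ μ' r : ℝ} (hμ : |μ - μ'| ≤ 1)
    (hr : 1 ≤ r) :
    renyiIntegral volume (gaussianPDFReal μ v) (gaussianPDFReal μ' v) r ≤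
      ENNReal.ofReal (exp (r * (r - 1) / (2 * v))) := by
  rw [renyiIntegral_gaussianPDFReal hv]
  have hrr : 0 ≤ r * (r - 1) := mul_nonneg (by linarith) (by linarith)
  exact ENNReal.ofReal_le_ofReal <| exp_le_exp.2 <| div_le_div_of_nonneg_right
    (mul_le_of_le_one_right hrr (sq_le_one_iff_abs_le_one _ |>.2 hμ)) (by positivity)

theorem measurable_uncurry_gaussianPDFReal_comp {α : Type*} [MeasurableSpace α] {g : α → ℝ}
    (hg : Measurable g) (v : ℝ≥0) :
    Measurable (Function.uncurry fun a x => gaussianPDFReal (g a) v x) :=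
  measurable_uncurry_gaussianPDFReal.comp
    ((hg.comp measurable_fst).prodMk (measurable_const.prodMk measurable_snd))

theorem composed_gaussianReal_eq_withDensity {Dset : Type*} (hv : v ≠ 0)
    {f : (i : ℕ) → Dset → (Fin i → ℝ) → ℝ} (hf : ∀ i D, Measurable (f i D))
    (D : Dset) (k : ℕ) :
    composed (fun i D h => gaussianReal (f i D h) v) D k =
      volume.withDensity fun z =>
        ENNReal.ofReal (adaptiveDensity (fun i h => gaussianPDFReal (f i D h) v) k z) :=
  composed_eq_withDensity volume (fun i => measurable_uncurry_gaussianPDFReal_comp (hf i D) v)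
    (fun _ _ _ => gaussianPDFReal_nonneg _ _ _) (fun _ _ => gaussianReal_of_var_ne_zero _ hv) k

variable {g g' : (i : ℕ) → (Fin i → ℝ) → ℝ}

theorem renyiIntegral_adaptiveDensity_gaussianPDFReal_le (hv : v ≠ 0)
    (hg : ∀ i, Measurable (g i)) (hg' : ∀ i, Measurable (g' i))
    (hgg' : ∀ i h, |g i h - g' i h| ≤ 1) {r : ℝ} (hr : 1 ≤ r) (k : ℕ) :
    renyiIntegral volume (adaptiveDensity (fun i h => gaussianPDFReal (g i h) v) k)
        (adaptiveDensity (fun i h => gaussianPDFReal (g' i h) v) k) r ≤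
      ENNReal.ofReal (exp (k * (r * (r - 1) / (2 * v)))) := by
  rw [exp_nat_mul, ENNReal.ofReal_pow (exp_nonneg _)]
  exact renyiIntegral_adaptiveDensity_le volume
    (fun i => measurable_uncurry_gaussianPDFReal_comp (hg i) v)
    (fun i => measurable_uncurry_gaussianPDFReal_comp (hg' i) v)
    (fun _ _ _ => gaussianPDFReal_nonneg _ _ _) (fun _ _ _ => gaussianPDFReal_nonneg _ _ _)
    (fun i h => renyiIntegral_gaussianPDFReal_le hv (hgg' i h) hr) k

theorem composed_gaussianReal_apply_le_one {Dset : Type*} (hv : v ≠ 0)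
    {f : (i : ℕ) → Dset → (Fin i → ℝ) → ℝ} (hf : ∀ i D, Measurable (f i D))
    (D : Dset) (k : ℕ) (S : Set (Fin k → ℝ)) :
    composed (fun i D h => gaussianReal (f i D h) v) D k S ≤ 1 := by
  refine (measure_mono (Set.subset_univ S)).trans ?_
  rw [composed_gaussianReal_eq_withDensity hv hf, withDensity_apply _ MeasurableSet.univ,
    Measure.restrict_univ]
  simpa [renyiIntegral_one] using
    renyiIntegral_adaptiveDensity_gaussianPDFReal_le hv (hf · D) (hf · D) (by simp) le_rfl k

theorem composed_gaussianReal_apply_le {Dset : Type*} (hv : v ≠ 0)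
    {f : (i : ℕ) → Dset → (Fin i → ℝ) → ℝ} (hf : ∀ i D, Measurable (f i D))
    {D D' : Dset}
    (hDD' : ∀ i h, |f i D h - f i D' h| ≤ 1) {r : ℝ} (hr : 1 ≤ r) (ε : ℝ) (k : ℕ)
    {S : Set (Fin k → ℝ)} (hS : MeasurableSet S) :
    composed (fun i D h => gaussianReal (f i D h) v) D k S ≤
      ENNReal.ofReal (exp ε) * composed (fun i D h => gaussianReal (f i D h) v) D' k S +
        ENNReal.ofReal (exp (-((r - 1) * ε) + k * (r * (r - 1) / (2 * v)))) := by
  rw [composed_gaussianReal_eq_withDensity hv hf D, composed_gaussianReal_eq_withDensity hv hf D']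
  refine (withDensity_le_exp_mul_withDensity_add_renyiIntegral volume
    (measurable_adaptiveDensity (fun i => measurable_uncurry_gaussianPDFReal_comp (hf i D') v) k)
    (adaptiveDensity_nonneg (fun _ _ _ => gaussianPDFReal_nonneg _ _ _) k)
    (adaptiveDensity_pos (fun _ _ _ => gaussianPDFReal_pos _ _ _ hv) k) hr ε hS).trans ?_
  rw [exp_add, ENNReal.ofReal_mul (exp_nonneg _)]
  gcongr
  exact renyiIntegral_adaptiveDensity_gaussianPDFReal_le hv (hf · D) (hf · D') hDD' hr k

end Gaussian

theorem rdp_exponent_at_optimal_order {k σ L r : ℝ} (hk : 0 < k) (hσ : 0 < σ) (hL : 0 ≤ L)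
    (hr : r = 1 + σ * √(2 * L / k)) :
    -((r - 1) * (k / (2 * σ ^ 2) + √(2 * k * L) / σ)) + k * (r * (r - 1) / (2 * σ ^ 2)) =
      -L := by
  set u := √(2 * L / k)
  have hu : k * u ^ 2 = 2 * L := by
    rw [sq_sqrt (by positivity)]
    field_simp
  have hsq : √(2 * k * L) = k * u := by
    rw [show 2 * k * L = k ^ 2 * (2 * L / k) by field_simp, sqrt_mul (sq_nonneg k), sqrt_sq hk.le]
  subst hr
  rw [hsq]
  field_simp
  linear_combination (-σ ^ 2) * hu

/-- `k` adaptive invocations of a sensitivity-1 Gaussian mechanism with variance `σ²`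
satisfy `(ε, δ)`-DP with `ε = k/(2σ²) + √(2k·log(1/δ))/σ`, for any `δ ∈ (0,1)`. -/
theorem adaptive_gaussian_composition_dp {Dset : Type*}
    (Neighbor : Dset → Dset → Prop)
    (f : (i : ℕ) → Dset → (Fin i → ℝ) → ℝ)
    (hf : ∀ i, ∀ h : Fin i → ℝ, ∀ D D', Neighbor D D' → |f i D h - f i D' h| ≤ 1)
    (hfmeas : ∀ i D, Measurable (f i D))
    (k : ℕ) (hk : 0 < k) (σ : ℝ) (hσ : 0 < σ) :
    ∀ δ ∈ Set.Ioo (0 : ℝ) 1,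
      DP Neighbor
        (fun D => composed (fun i D h => gaussianReal (f i D h) ⟨σ ^ 2, sq_nonneg σ⟩) D k)
        (k / (2 * σ ^ 2) + Real.sqrt (2 * k * Real.log (1 / δ)) / σ) δ := by
  rintro δ ⟨hδ0, hδ1⟩ D D' hN S hS
  set v : ℝ≥0 := ⟨σ ^ 2, sq_nonneg σ⟩
  have hv : v ≠ 0 := fun h => (pow_pos hσ 2).ne' (congrArg NNReal.toReal h)
  set L := log (1 / δ)
  have hL : 0 ≤ L := log_nonneg (one_le_one_div hδ0 hδ1.le)
  set r := 1 + σ * √(2 * L / k) with hr_def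
  have hr : 1 ≤ r := le_add_of_nonneg_right (by positivity)
  have hbound := composed_gaussianReal_apply_le hv hfmeas (fun i h => hf i h D D' hN) hr
    (k / (2 * σ ^ 2) + √(2 * k * L) / σ) k hS
  rw [show (v : ℝ) = σ ^ 2 from rfl,
    rdp_exponent_at_optimal_order (by exact_mod_cast hk) hσ hL hr_def, exp_neg,
    exp_log (by positivity), one_div, inv_inv] at hbound
  have hfin :=
    ne_top_of_le_ne_top ENNReal.one_ne_top (composed_gaussianReal_apply_le_one hv hfmeas D' k S)
  refine ENNReal.toReal_le_of_le_ofReal (by positivity) (hbound.trans_eq ?_)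
  rw [ENNReal.ofReal_add (by positivity) hδ0.le, ENNReal.ofReal_mul (exp_nonneg _),
    ENNReal.ofReal_toReal hfin]
end
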